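/- arXiv:2207.01830 — 6 statements merged into one kernel-verified Lean document; each statement's English description precedes it below -/
import Mathlib

section
/- Let λ > 0, x ∈ [0,1], α ∈ (0,1], and θ₁ > 0. Then the map H(θ₀) = α·λ(θ₀+θ₁)/(1+λ(θ₀+θ₁)) + x(1-α)·λθ₀/(1+λθ₀) has exactly one fixed point θ₀ in (0,∞), and this fixed point lies in (0,1). -/
private lemma H_lt_one (lam x α θ1 θ0 : ℝ) (hlam : 0 < lam)
    (hx0 : 0 ≤ x) (hx1 : x ≤ 1) (hα0 : 0 < α) (hα1 : α ≤ 1) (hθ1 : 0 < θ1) (hθ0 : 0 ≤ θ0) :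
    α * (lam * (θ0 + θ1) / (1 + lam * (θ0 + θ1))) +
      x * (1 - α) * (lam * θ0 / (1 + lam * θ0)) < 1 := by
  have d1 : 0 < 1 + lam * (θ0 + θ1) := by positivity
  have d2 : 0 < 1 + lam * θ0 := by positivity
  have h1 : lam * (θ0 + θ1) / (1 + lam * (θ0 + θ1)) < 1 := by
    rw [div_lt_one d1]; linarith
  have h2 : lam * θ0 / (1 + lam * θ0) ≤ 1 := by
    rw [div_le_one d2]; linarith
  have h2' : 0 ≤ lam * θ0 / (1 + lam * θ0) := by positivity
  have hxα : 0 ≤ x * (1 - α) := mul_nonneg hx0 (by linarith)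
  nlinarith [mul_lt_mul_of_pos_left h1 hα0,
    mul_le_mul_of_nonneg_left h2 hxα]

private lemma key (lam x α θ1 a b : ℝ) (hlam : 0 < lam) (hx0 : 0 ≤ x)
    (hα0 : 0 < α) (hα1 : α ≤ 1) (hθ1 : 0 < θ1) (ha : 0 < a) (hab : a < b) :
    a * (α * (lam * (b + θ1) / (1 + lam * (b + θ1))) +
          x * (1 - α) * (lam * b / (1 + lam * b)))
    < b * (α * (lam * (a + θ1) / (1 + lam * (a + θ1))) +
          x * (1 - α) * (lam * a / (1 + lam * a))) := by
  have hb : 0 < b := ha.trans hab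
  have dA : 0 < 1 + lam * (a + θ1) := by positivity
  have dB : 0 < 1 + lam * (b + θ1) := by positivity
  have da : 0 < 1 + lam * a := by positivity
  have db : 0 < 1 + lam * b := by positivity
  have T1 : a * (lam * (b + θ1) / (1 + lam * (b + θ1)))
      < b * (lam * (a + θ1) / (1 + lam * (a + θ1))) := by
    rw [mul_div_assoc', mul_div_assoc', div_lt_div_iff₀ dB dA]
    nlinarith [mul_pos (mul_pos hlam hlam)
      (mul_pos (mul_pos (show (0:ℝ) < a + θ1 by linarith) (show (0:ℝ) < b + θ1 by linarith))
        (show (0:ℝ) < b - a by linarith)),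
      mul_pos hlam (mul_pos hθ1 (show (0:ℝ) < b - a by linarith))]
  have T2 : a * (lam * b / (1 + lam * b)) ≤ b * (lam * a / (1 + lam * a)) := by
    rw [mul_div_assoc', mul_div_assoc', div_le_div_iff₀ db da]
    nlinarith [mul_pos (mul_pos hlam hlam)
      (mul_pos (mul_pos ha hb) (show (0:ℝ) < b - a by linarith))]
  have hxα : 0 ≤ x * (1 - α) := mul_nonneg hx0 (by linarith)
  nlinarith [mul_lt_mul_of_pos_left T1 hα0, mul_le_mul_of_nonneg_left T2 hxα]

/-- **Unique positive steady state of the truth.** For `λ > 0`, `x ∈ [0,1]`, `α ∈ (0,1]` and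
rumor prevalence `θ₁ > 0`, the map
`H(θ₀) = α·λ(θ₀+θ₁)/(1+λ(θ₀+θ₁)) + x(1-α)·λθ₀/(1+λθ₀)` has exactly one fixed point
`θ₀ ∈ (0,∞)`, and any such fixed point lies in `(0,1)`. -/
theorem truth_unique_fixed_point (lam x α θ1 : ℝ) (hlam : 0 < lam)
    (hx : x ∈ Set.Icc (0 : ℝ) 1) (hα : α ∈ Set.Ioc (0 : ℝ) 1) (hθ1 : 0 < θ1) :
    (∃! θ0 : ℝ, 0 < θ0 ∧
      α * (lam * (θ0 + θ1) / (1 + lam * (θ0 + θ1))) +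
        x * (1 - α) * (lam * θ0 / (1 + lam * θ0)) = θ0) ∧
    (∀ θ0 : ℝ, 0 < θ0 →
      α * (lam * (θ0 + θ1) / (1 + lam * (θ0 + θ1))) +
        x * (1 - α) * (lam * θ0 / (1 + lam * θ0)) = θ0 → θ0 < 1) := by
  obtain ⟨hx0, hx1⟩ := hx
  obtain ⟨hα0, hα1⟩ := hα
  set f : ℝ → ℝ := fun t =>
    α * (lam * (t + θ1) / (1 + lam * (t + θ1))) +
      x * (1 - α) * (lam * t / (1 + lam * t)) - t with hf
  have hcont : ContinuousOn f (Set.Icc (0:ℝ) 1) := by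
    apply ContinuousOn.sub _ continuousOn_id
    apply ContinuousOn.add
    · exact ContinuousOn.mul continuousOn_const
        (ContinuousOn.div (by fun_prop) (by fun_prop)
          (fun t ht => ne_of_gt (by nlinarith [ht.1])))
    · exact ContinuousOn.mul continuousOn_const
        (ContinuousOn.div (by fun_prop) (by fun_prop)
          (fun t ht => ne_of_gt (by nlinarith [ht.1])))
  have hf0 : 0 < f 0 := by
    simp only [hf]
    have d1 : 0 < 1 + lam * (0 + θ1) := by positivity
    have : 0 < lam * (0 + θ1) / (1 + lam * (0 + θ1)) := by positivity
    have : 0 ≤ x * (1 - α) * (lam * 0 / (1 + lam * 0)) := by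
      simp
    nlinarith [mul_pos hα0 (show 0 < lam * (0 + θ1) / (1 + lam * (0 + θ1)) by positivity)]
  have hf1 : f 1 < 0 := by
    have := H_lt_one lam x α θ1 1 hlam hx0 hx1 hα0 hα1 hθ1 (by norm_num)
    simp only [hf]; linarith
  have := intermediate_value_Ioo' (by norm_num : (0:ℝ) ≤ 1) hcont
    (Set.mem_Ioo.mpr ⟨hf1, hf0⟩)
  obtain ⟨c, hcmem, hcfix⟩ := this
  have hc0 : 0 < c := hcmem.1
  have hcfix' : α * (lam * (c + θ1) / (1 + lam * (c + θ1))) +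
      x * (1 - α) * (lam * c / (1 + lam * c)) = c := by
    have : f c = 0 := hcfix
    simp only [hf] at this; linarith
  constructor
  · refine ⟨c, ⟨hc0, hcfix'⟩, ?_⟩
    rintro y ⟨hy0, hyfix⟩
    rcases lt_trichotomy y c with h | h | h
    · have := key lam x α θ1 y c hlam hx0 hα0 hα1 hθ1 hy0 h
      rw [hyfix, hcfix'] at this
      nlinarith
    · exact h
    · have := key lam x α θ1 c y hlam hx0 hα0 hα1 hθ1 hc0 h
      rw [hyfix, hcfix'] at this
      nlinarith
  · intro θ0 h0 heq
    have := H_lt_one lam x α θ1 θ0 hlam hx0 hx1 hα0 hα1 hθ1 h0.le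
    linarith
end

section
/- Let λ > 0, x ∈ [0,1], α ∈ (0,1], and 0 < θ₁ < θ₁'. Let θ₀ and θ₀' denote, respectively, the unique positive fixed points of the maps t ↦ α·λ(t+θ₁)/(1+λ(t+θ₁)) + x(1-α)·λt/(1+λt) and t ↦ α·λ(t+θ₁')/(1+λ(t+θ₁')) + x(1-α)·λt/(1+λt). Then θ₀ < θ₀'. In words, the steady-state prevalence of the truth is strictly increasing in the prevalence of the rumor. -/
/-!
Write `H_θ₁(t)` for the map whose fixed point is the truth prevalence. It is strictly increasing
in `θ₁`, and `H_θ₁(t) / t` is antitone in `t > 0`, because `λs / (1 + λs)` saturates. If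
`θ₀' ≤ θ₀`, the second fact gives `θ₀' ≤ H_θ₁(θ₀')` from `H_θ₁(θ₀) = θ₀`, while the first gives
`H_θ₁(θ₀') < H_θ₁'(θ₀') = θ₀'`.
-/

noncomputable def saturation (lam s : ℝ) : ℝ := lam * s / (1 + lam * s)

/-- The paper's map `H` at rumor prevalence `θ1`. -/
noncomputable def truthMap (lam x α θ1 t : ℝ) : ℝ :=
  α * saturation lam (t + θ1) + x * (1 - α) * saturation lam t

lemma saturation_lt_saturation {lam s t : ℝ} (hlam : 0 < lam) (hs : 0 ≤ s) (hst : s < t) :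
    saturation lam s < saturation lam t := by
  unfold saturation
  rw [div_lt_div_iff₀ (by positivity) (by nlinarith)]
  nlinarith

/-- `saturation lam (· + a) / ·` is antitone on `(0, ∞)`, stated without division. -/
lemma saturation_add_mul_le {lam a s t : ℝ} (hlam : 0 ≤ lam) (ha : 0 ≤ a) (hs : 0 ≤ s)
    (hst : s ≤ t) : saturation lam (t + a) * s ≤ saturation lam (s + a) * t := by
  have hsa : 0 ≤ lam * (s + a) := by positivity
  have hta : 0 ≤ lam * (t + a) := mul_nonneg hlam (by linarith)
  unfold saturation
  rw [div_mul_eq_mul_div, div_mul_eq_mul_div, div_le_div_iff₀ (by linarith) (by linarith)]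
  nlinarith [mul_nonneg (mul_nonneg hsa hta) (sub_nonneg.2 hst), mul_nonneg hlam ha,
    mul_nonneg (mul_nonneg hlam ha) (sub_nonneg.2 hst)]

lemma truthMap_lt_truthMap {lam x α θ1 θ1' t : ℝ} (hlam : 0 < lam) (hα : 0 < α) (ht : 0 ≤ t)
    (h1 : 0 ≤ θ1) (h11 : θ1 < θ1') : truthMap lam x α θ1 t < truthMap lam x α θ1' t := by
  unfold truthMap
  have := saturation_lt_saturation hlam (by positivity) (add_lt_add_right h11 t)
  gcongr

lemma truthMap_mul_le {lam x α θ1 s t : ℝ} (hlam : 0 ≤ lam) (hα : 0 ≤ α) (hc : 0 ≤ x * (1 - α))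
    (h1 : 0 ≤ θ1) (hs : 0 ≤ s) (hst : s ≤ t) :
    truthMap lam x α θ1 t * s ≤ truthMap lam x α θ1 s * t := by
  have hshift := saturation_add_mul_le hlam h1 hs hst
  have hplain := saturation_add_mul_le hlam le_rfl hs hst
  simp only [add_zero] at hplain
  unfold truthMap
  nlinarith [mul_le_mul_of_nonneg_left hshift hα, mul_le_mul_of_nonneg_left hplain hc]

/-- **Truth prevalence is strictly increasing in rumor prevalence.** For `λ > 0`, `x ∈ [0,1]`,
`α ∈ (0,1]` and rumor prevalences `0 < θ₁ < θ₁'`, if `θ₀` and `θ₀'` are positive fixed points of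
`t ↦ α·λ(t+θ₁)/(1+λ(t+θ₁)) + x(1-α)·λt/(1+λt)` and
`t ↦ α·λ(t+θ₁')/(1+λ(t+θ₁')) + x(1-α)·λt/(1+λt)` respectively, then `θ₀ < θ₀'`. -/
theorem truth_increasing_in_rumor (lam x α θ1 θ1' θ0 θ0' : ℝ) (hlam : 0 < lam)
    (hx : x ∈ Set.Icc (0 : ℝ) 1) (hα : α ∈ Set.Ioc (0 : ℝ) 1)
    (h1 : 0 < θ1) (h11 : θ1 < θ1')
    (h0 : 0 < θ0)
    (hfix : α * (lam * (θ0 + θ1) / (1 + lam * (θ0 + θ1))) +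
      x * (1 - α) * (lam * θ0 / (1 + lam * θ0)) = θ0)
    (h0' : 0 < θ0')
    (hfix' : α * (lam * (θ0' + θ1') / (1 + lam * (θ0' + θ1'))) +
      x * (1 - α) * (lam * θ0' / (1 + lam * θ0')) = θ0') :
    θ0 < θ0' := by
  change truthMap lam x α θ1 θ0 = θ0 at hfix
  change truthMap lam x α θ1' θ0' = θ0' at hfix'
  by_contra! hle
  have hc : 0 ≤ x * (1 - α) := mul_nonneg hx.1 (sub_nonneg.2 hα.2)
  have hsub : θ0' ≤ truthMap lam x α θ1 θ0' := by
    have := truthMap_mul_le hlam.le hα.1.le hc h1.le h0'.le hle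
    rw [hfix, mul_comm] at this
    exact le_of_mul_le_mul_right this h0
  have hlt := truthMap_lt_truthMap (x := x) hlam hα.1 h0'.le h1.le h11
  linarith
end

section
/- Let x ∈ [0,1/2) and λ ≥ 2, and set θ₀ = 1 - 2/λ and A = 1 - 1/(λ(1-x)). Then θ₀(1 + λθ₀) > A if and only if λ > 2 + √(2 - 1/(1-x)). -/
/-! Writing `θ₀ = (λ - 2)/λ`, one finds `θ₀(1 + λθ₀) - A = ((λ - 2)² - (2 - 1/c))/λ` with `c = 1 - x`,
so for `λ > 0` the condition is `2 - 1/c < (λ - 2)²`. Since `c > 1/2` makes `2 - 1/c` nonnegative and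
`λ ≥ 2` makes `λ - 2` nonnegative, this is equivalent to `√(2 - 1/c) < λ - 2`. -/

theorem truth_prevalence_sub_eradication_level {lam : ℝ} (hlam : lam ≠ 0) (c : ℝ) :
    (1 - 2 / lam) * (1 + lam * (1 - 2 / lam)) - (1 - 1 / (lam * c))
      = ((lam - 2) ^ 2 - (2 - 1 / c)) / lam := by
  field_simp
  ring

theorem eradication_level_lt_iff {lam : ℝ} (hlam : 0 < lam) (c : ℝ) :
    1 - 1 / (lam * c) < (1 - 2 / lam) * (1 + lam * (1 - 2 / lam)) ↔ 2 - 1 / c < (lam - 2) ^ 2 := by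
  rw [← sub_pos, truth_prevalence_sub_eradication_level hlam.ne', div_pos_iff_of_pos_right hlam,
    sub_pos]

/-- **Eradication threshold condition.** For `x ∈ [0,1/2)` and `λ ≥ 2`, with
`θ₀ = 1 - 2/λ` and `A = 1 - 1/(λ(1-x))`, the inequality `θ₀(1 + λθ₀) > A` holds iff
`λ > 2 + √(2 - 1/(1-x))`. -/
theorem eradication_threshold (lam x : ℝ) (hx : x ∈ Set.Ico (0 : ℝ) (1 / 2))
    (hlam : 2 ≤ lam) :
    (1 - 1 / (lam * (1 - x))) < (1 - 2 / lam) * (1 + lam * (1 - 2 / lam)) ↔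
      2 + Real.sqrt (2 - 1 / (1 - x)) < lam := by
  have hc : 0 ≤ 2 - 1 / (1 - x) := by
    rw [sub_nonneg, div_le_iff₀ (by linarith [hx.2])]
    linarith [hx.2]
  rw [eradication_level_lt_iff (by linarith) (1 - x), ← lt_sub_iff_add_lt',
    Real.sqrt_lt hc (sub_nonneg.mpr hlam)]
end

section
/- Let x ∈ [0,1/2) and λ ∈ (1/(1-x), 2). Set ᾱ = 1 - 1/(λ(1-x)) (the minimal inspection rate eradicating the rumor). Then: (i) at α = ᾱ, the eradicated-rumor truth prevalence α(1-x) + x - 1/λ = 1 - 2/λ is nonpositive, so the equation θ₀ = (α + x(1-α))·λθ₀/(1+λθ₀) has no positive solution; whereas (ii) for every α ∈ (0, ᾱ), setting θ₁ = (1-α)(1-x) - 1/λ > 0, the map H(θ₀) = α·λ(θ₀+θ₁)/(1+λ(θ₀+θ₁)) + x(1-α)·λθ₀/(1+λθ₀) has a unique positive fixed point. In words, the truth survives only because the rumor circulates. -/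
/-- Clear denominators in the fixed-point equation. -/
lemma rumor_fp_poly (lam α c t1 a : ℝ) (hDa : (1:ℝ) + lam * (a + t1) ≠ 0)
    (hda : (1:ℝ) + lam * a ≠ 0)
    (heq : α * (lam * (a + t1) / (1 + lam * (a + t1))) + c * (lam * a / (1 + lam * a)) = a) :
    α * lam * (a + t1) * (1 + lam * a) + c * lam * a * (1 + lam * (a + t1))
      = a * ((1 + lam * (a + t1)) * (1 + lam * a)) := by
  field_simp at heq
  linear_combination heq

/-- Two positive fixed points with `a < b` are impossible. -/
lemma rumor_uniq_aux (lam α c t1 a b : ℝ) (hlam : 0 < lam) (hα : 0 < α) (hc : 0 ≤ c)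
    (ht1 : 0 < t1) (ha : 0 < a) (hb : 0 < b) (hab : a < b)
    (Pa : α * lam * (a + t1) * (1 + lam * a) + c * lam * a * (1 + lam * (a + t1))
      = a * ((1 + lam * (a + t1)) * (1 + lam * a)))
    (Pb : α * lam * (b + t1) * (1 + lam * b) + c * lam * b * (1 + lam * (b + t1))
      = b * ((1 + lam * (b + t1)) * (1 + lam * b))) : False := by
  have hda : (0:ℝ) < 1 + lam * a := by nlinarith
  have hdb : (0:ℝ) < 1 + lam * b := by nlinarith
  have hDa : (0:ℝ) < 1 + lam * (a + t1) := by nlinarith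
  have hDb : (0:ℝ) < 1 + lam * (b + t1) := by nlinarith
  have key : α * lam * (b - a) * (t1 + lam * (a + t1) * (b + t1)) * (1 + lam * a) * (1 + lam * b)
      + c * lam ^ 2 * (b - a) * a * b * (1 + lam * (a + t1)) * (1 + lam * (b + t1)) = 0 := by
    linear_combination (b * (1 + lam * (b + t1)) * (1 + lam * b)) * Pa
      - (a * (1 + lam * (a + t1)) * (1 + lam * a)) * Pb
  have hT1 : 0 < α * lam * (b - a) * (t1 + lam * (a + t1) * (b + t1)) * (1 + lam * a)
      * (1 + lam * b) := by
    have h1 : 0 < t1 + lam * (a + t1) * (b + t1) := by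
      have := mul_pos (mul_pos hlam (by linarith : (0:ℝ) < a + t1)) (by linarith : (0:ℝ) < b + t1)
      linarith
    have h2 : 0 < b - a := by linarith
    positivity
  have hT2 : 0 ≤ c * lam ^ 2 * (b - a) * a * b * (1 + lam * (a + t1)) * (1 + lam * (b + t1)) := by
    have h2 : 0 < b - a := by linarith
    positivity
  linarith

set_option maxHeartbeats 1600000 in
/-- **The rumor keeps the truth alive.** Let `x ∈ [0,1/2)` and `λ ∈ (1/(1-x), 2)`, and let
`ᾱ = 1 - 1/(λ(1-x))` be the minimal inspection rate eradicating the rumor. Then: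
(i) at `α = ᾱ` the eradicated-rumor truth prevalence `ᾱ(1-x) + x - 1/λ` equals `1 - 2/λ`,
which is nonpositive, and the equation `θ₀ = (ᾱ + x(1-ᾱ))·λθ₀/(1+λθ₀)` has no positive
solution; (ii) for every `α ∈ (0, ᾱ)`, with `θ₁ = (1-α)(1-x) - 1/λ > 0`, the map
`H(θ₀) = α·λ(θ₀+θ₁)/(1+λ(θ₀+θ₁)) + x(1-α)·λθ₀/(1+λθ₀)` has a unique positive fixed point. -/
theorem rumor_creates_truth (lam x : ℝ) (hx : x ∈ Set.Ico (0 : ℝ) (1 / 2))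
    (hlam : lam ∈ Set.Ioo (1 / (1 - x)) 2) :
    ((1 - 1 / (lam * (1 - x))) * (1 - x) + x - 1 / lam = 1 - 2 / lam ∧
      1 - 2 / lam ≤ 0 ∧
      ¬∃ θ0 : ℝ, 0 < θ0 ∧
        θ0 = ((1 - 1 / (lam * (1 - x))) + x * (1 - (1 - 1 / (lam * (1 - x))))) *
          (lam * θ0 / (1 + lam * θ0))) ∧
    (∀ α : ℝ, α ∈ Set.Ioo (0 : ℝ) (1 - 1 / (lam * (1 - x))) →
      0 < (1 - α) * (1 - x) - 1 / lam ∧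
      (∃! θ0 : ℝ, 0 < θ0 ∧
        α * (lam * (θ0 + ((1 - α) * (1 - x) - 1 / lam)) /
            (1 + lam * (θ0 + ((1 - α) * (1 - x) - 1 / lam)))) +
          x * (1 - α) * (lam * θ0 / (1 + lam * θ0)) = θ0)) := by
  obtain ⟨hx0, hx2⟩ := hx
  obtain ⟨hlam1, hlam2⟩ := hlam
  have hx1 : (0:ℝ) < 1 - x := by linarith
  have hlam0 : (0:ℝ) < lam := lt_trans (by positivity) hlam1
  have hlx : (1:ℝ) < lam * (1 - x) := by
    rw [div_lt_iff₀ hx1] at hlam1; linarith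
  have hlx0 : (0:ℝ) < lam * (1 - x) := by linarith
  have hlamge : (1:ℝ) < lam := by nlinarith
  constructor
  · refine ⟨by field_simp; ring, ?_, ?_⟩
    · have : (1:ℝ) ≤ 2 / lam := by
        rw [le_div_iff₀ hlam0]; linarith
      linarith
    · rintro ⟨θ0, hθ0, heq⟩
      have hd : (0:ℝ) < 1 + lam * θ0 := by positivity
      have hcoef : ((1 - 1 / (lam * (1 - x))) + x * (1 - (1 - 1 / (lam * (1 - x))))) = 1 - 1 / lam := by
        field_simp
        ring
      rw [hcoef] at heq
      field_simp at heq
      nlinarith [heq, hθ0, hlam2, hlam0, mul_pos hlam0 hθ0, sq_nonneg θ0]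
  · intro α ⟨hα0, hα1⟩
    set t1 : ℝ := (1 - α) * (1 - x) - 1 / lam with ht1def
    have hαlt1 : α < 1 := by
      have : 1 - 1 / (lam * (1 - x)) < 1 := by
        have : 0 < 1 / (lam * (1 - x)) := by positivity
        linarith
      linarith
    have ht1 : 0 < t1 := by
      have h1 : 1 / (lam * (1 - x)) < 1 - α := by linarith
      rw [div_lt_iff₀ hlx0] at h1
      have h2 : 1 / lam < (1 - α) * (1 - x) := by
        rw [div_lt_iff₀ hlam0]; nlinarith
      simp only [ht1def]; linarith
    refine ⟨ht1, ?_⟩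
    -- the fixed point map minus identity
    set f : ℝ → ℝ := fun θ => α * (lam * (θ + t1) / (1 + lam * (θ + t1))) +
        x * (1 - α) * (lam * θ / (1 + lam * θ)) - θ with hf
    have hden1 : ∀ θ : ℝ, 0 ≤ θ → (0:ℝ) < 1 + lam * (θ + t1) := by
      intro θ hθ; nlinarith
    have hden2 : ∀ θ : ℝ, 0 ≤ θ → (0:ℝ) < 1 + lam * θ := by
      intro θ hθ; nlinarith
    have c1 : ContinuousOn (fun θ : ℝ => lam * (θ + t1) / (1 + lam * (θ + t1)))
        (Set.Icc 0 1) :=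
      ContinuousOn.div (by fun_prop) (by fun_prop) (fun θ hθ => (hden1 θ hθ.1).ne')
    have c2 : ContinuousOn (fun θ : ℝ => lam * θ / (1 + lam * θ)) (Set.Icc 0 1) :=
      ContinuousOn.div (by fun_prop) (by fun_prop) (fun θ hθ => (hden2 θ hθ.1).ne')
    have hc : ContinuousOn f (Set.Icc 0 1) :=
      ((continuousOn_const.mul c1).add (continuousOn_const.mul c2)).sub continuousOn_id
    have hf0 : 0 < f 0 := by
      simp only [hf]
      have h1 := hden1 0 le_rfl
      have : 0 < lam * (0 + t1) / (1 + lam * (0 + t1)) := by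
        apply div_pos _ h1; nlinarith
      have h2 : x * (1 - α) * (lam * 0 / (1 + lam * 0)) = 0 := by simp
      nlinarith [mul_pos hα0 this]
    have hf1 : f 1 < 0 := by
      simp only [hf]
      have h1 := hden1 1 zero_le_one
      have h2 := hden2 1 zero_le_one
      have b1 : lam * (1 + t1) / (1 + lam * (1 + t1)) < 1 := by
        rw [div_lt_one h1]; linarith
      have b1' : 0 ≤ lam * (1 + t1) / (1 + lam * (1 + t1)) := by
        apply div_nonneg _ h1.le; nlinarith
      have b2 : lam * 1 / (1 + lam * 1) < 1 := by
        rw [div_lt_one h2]; linarith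
      have b2' : 0 ≤ lam * 1 / (1 + lam * 1) := by positivity
      have hxa : 0 ≤ x * (1 - α) := by nlinarith
      have hsum : α + x * (1 - α) < 1 := by nlinarith
      nlinarith [mul_le_mul_of_nonneg_left b2.le hxa, mul_lt_mul_of_pos_left b1 hα0]
    have hmem : (0:ℝ) ∈ Set.Ioo (f 1) (f 0) := ⟨hf1, hf0⟩
    obtain ⟨θ, hθmem, hθeq⟩ := intermediate_value_Ioo' (by norm_num : (0:ℝ) ≤ 1) hc hmem
    have hθpos : 0 < θ := hθmem.1
    have hθfix : α * (lam * (θ + t1) / (1 + lam * (θ + t1))) +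
        x * (1 - α) * (lam * θ / (1 + lam * θ)) = θ := by
      have := hθeq
      simp only [hf] at this
      linarith
    refine ⟨θ, ⟨hθpos, hθfix⟩, ?_⟩
    rintro y ⟨hy, hyeq⟩
    -- uniqueness
    have hxα : 0 ≤ x * (1 - α) := by nlinarith
    have poly : ∀ a : ℝ, 0 < a →
        α * (lam * (a + t1) / (1 + lam * (a + t1))) +
          x * (1 - α) * (lam * a / (1 + lam * a)) = a →
        α * lam * (a + t1) * (1 + lam * a) + x * (1 - α) * lam * a * (1 + lam * (a + t1))
          = a * ((1 + lam * (a + t1)) * (1 + lam * a)) := by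
      intro a hapos haeq
      exact rumor_fp_poly lam α (x * (1 - α)) t1 a (hden1 a hapos.le).ne' (hden2 a hapos.le).ne' haeq
    have Py := poly y hy hyeq
    have Pθ := poly θ hθpos hθfix
    rcases lt_trichotomy y θ with h | h | h
    · exact absurd (rumor_uniq_aux lam α (x * (1 - α)) t1 y θ hlam0 hα0 hxα ht1 hy hθpos h Py Pθ)
        (fun h => h.elim)
    · exact h
    · exact absurd (rumor_uniq_aux lam α (x * (1 - α)) t1 θ y hlam0 hα0 hxα ht1 hθpos hy h Pθ Py)
        (fun h => h.elim)
end

section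
/- Let λ > 0, α ∈ [0,1], x ∈ [0,1], and let θ₀, θ₁ ≥ 0 with θ := θ₀ + θ₁ > 0 satisfy θ = α·λθ/(1+λθ) + (1-α)·(x·λθ₀/(1+λθ₀) + (1-x)·λθ₁/(1+λθ₁)). Then θ ≤ 1 - 1/λ. Moreover, if α = 1 and λ > 1, the unique positive solution of this equation is θ = 1 - 1/λ. -/
/-!
The map `t ↦ λt / (1 + λt)` is increasing on `[0, ∞)`, so each of `θ₀, θ₁ ≤ θ` has response at
most that of `θ`; the right-hand side of the steady-state equation is a convex combination of
such responses, hence `θ ≤ λθ / (1 + λθ)`. Dividing by `θ > 0` gives `1 + λθ ≤ λ`. When `α = 1`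
the equation is `θ = λθ / (1 + λθ)` itself, and the same division gives `1 + λθ = λ`.
-/

open Set

lemma convex_combo_le {x a b c : ℝ} (hx : x ∈ Icc (0 : ℝ) 1) (ha : a ≤ c) (hb : b ≤ c) :
    x * a + (1 - x) * b ≤ c := by
  simpa only [smul_eq_mul] using
    (Convex.combo_le_max a b hx.1 (sub_nonneg.2 hx.2) (add_sub_cancel x 1)).trans (max_le ha hb)

lemma mul_div_one_add_mul_le_of_le {lam s t : ℝ} (hlam : 0 ≤ lam) (hs : 0 ≤ s) (hst : s ≤ t) :
    lam * s / (1 + lam * s) ≤ lam * t / (1 + lam * t) := by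
  rw [div_le_div_iff₀ (by positivity) (by nlinarith)]
  nlinarith

lemma le_one_sub_inv_of_le_mul_div_one_add_mul {lam θ : ℝ} (hlam : 0 < lam) (hθ : 0 < θ)
    (h : θ ≤ lam * θ / (1 + lam * θ)) : θ ≤ 1 - 1 / lam := by
  have hden : 1 + lam * θ ≤ lam := by
    rw [le_div_iff₀ (by positivity)] at h
    nlinarith
  rw [le_sub_comm, div_le_iff₀ hlam]
  linarith

lemma eq_one_sub_inv_of_eq_mul_div_one_add_mul {lam θ : ℝ} (hlam : lam ≠ 0) (hθ : θ ≠ 0)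
    (h : θ = lam * θ / (1 + lam * θ)) : θ = 1 - 1 / lam := by
  have hden : 1 + lam * θ ≠ 0 := fun h0 ↦ hθ (by rwa [h0, div_zero] at h)
  have : 1 + lam * θ = lam := by
    rw [eq_div_iff hden] at h
    exact mul_left_cancel₀ hθ (by linear_combination h)
  field_simp
  linear_combination this

/-- **Total information prevalence is bounded by the SIS prevalence.** For `λ > 0`,
`α ∈ [0,1]`, `x ∈ [0,1]`, and `θ₀, θ₁ ≥ 0` with `θ = θ₀ + θ₁ > 0` satisfying the total
prevalence steady-state equation, one has `θ ≤ 1 - 1/λ`; moreover, if `α = 1` and `λ > 1`,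
then `θ = 1 - 1/λ`. -/
theorem total_prevalence_bound (lam α x θ0 θ1 : ℝ) (hlam : 0 < lam)
    (hα : α ∈ Set.Icc (0 : ℝ) 1) (hx : x ∈ Set.Icc (0 : ℝ) 1)
    (h0 : 0 ≤ θ0) (h1 : 0 ≤ θ1) (hpos : 0 < θ0 + θ1)
    (heq : θ0 + θ1 = α * (lam * (θ0 + θ1) / (1 + lam * (θ0 + θ1))) +
      (1 - α) * (x * (lam * θ0 / (1 + lam * θ0)) + (1 - x) * (lam * θ1 / (1 + lam * θ1)))) :
    θ0 + θ1 ≤ 1 - 1 / lam ∧ (α = 1 → 1 < lam → θ0 + θ1 = 1 - 1 / lam) := by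
  have hmix : x * (lam * θ0 / (1 + lam * θ0)) + (1 - x) * (lam * θ1 / (1 + lam * θ1)) ≤
      lam * (θ0 + θ1) / (1 + lam * (θ0 + θ1)) :=
    convex_combo_le hx
      (mul_div_one_add_mul_le_of_le hlam.le h0 (le_add_of_nonneg_right h1))
      (mul_div_one_add_mul_le_of_le hlam.le h1 (le_add_of_nonneg_left h0))
  refine ⟨le_one_sub_inv_of_le_mul_div_one_add_mul hlam hpos ?_, fun hα1 _ ↦ ?_⟩
  · exact heq.trans_le (convex_combo_le hα le_rfl hmix)
  · subst hα1
    refine eq_one_sub_inv_of_eq_mul_div_one_add_mul hlam.ne' hpos.ne' ?_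
    simpa only [one_mul, sub_self, zero_mul, add_zero] using heq
end

section
/- Let λ > 0, x ∈ [0,1) and A ∈ [0,1]. There exists an inspection rate α ∈ [0, A] such that the equation θ = (1-x)(1-α)·λθ/(1+λθ) has no positive solution if and only if A ≥ 1 - 1/(λ(1-x)). In words, a planner with budget A can fully eradicate the rumor if and only if A ≥ 1 - 1/(λ(1-x)). -/
/-! With `c = (1-x)(1-α)`, dividing the steady-state equation by `θ > 0` leaves `1 + λθ = cλ`,
so a positive steady state exists exactly when the reproduction number `cλ` exceeds `1`.
The planner can push `cλ` down to `1` iff `1 - α ≤ 1/(λ(1-x))` for some `α ≤ A`, and the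
largest admissible rate `α = A` is the best choice. -/

theorem exists_pos_eq_mul_div_one_add_iff {lam c : ℝ} (hlam : 0 < lam) :
    (∃ θ : ℝ, 0 < θ ∧ θ = c * (lam * θ / (1 + lam * θ))) ↔ 1 < c * lam := by
  constructor
  · rintro ⟨θ, hθ, heq⟩
    have hden : 0 < 1 + lam * θ := by positivity
    have hsteady : 1 + lam * θ = c * lam := by
      rw [mul_div_assoc', eq_div_iff hden.ne'] at heq
      nlinarith
    nlinarith [mul_pos hlam hθ]
  · intro hc
    refine ⟨(c * lam - 1) / lam, div_pos (by linarith) hlam, ?_⟩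
    have hlamθ : lam * ((c * lam - 1) / lam) = c * lam - 1 := mul_div_cancel₀ _ hlam.ne'
    have hc0 : c ≠ 0 := left_ne_zero_of_mul (zero_lt_one.trans hc).ne'
    rw [hlamθ, add_sub_cancel]
    field_simp

theorem mul_one_sub_le_one_iff {k α : ℝ} (hk : 0 < k) : k * (1 - α) ≤ 1 ↔ 1 - 1 / k ≤ α := by
  rw [← le_div_iff₀' hk]
  constructor <;> intro h <;> linarith

/-- **Budget needed to eradicate the rumor.** For `λ > 0`, `x ∈ [0,1)` and budget
`A ∈ [0,1]`: there exists an inspection rate `α ∈ [0,A]` such that the equation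
`θ = (1-x)(1-α)·λθ/(1+λθ)` has no positive solution iff `A ≥ 1 - 1/(λ(1-x))`. -/
theorem eradication_budget (lam x A : ℝ) (hlam : 0 < lam)
    (hx : x ∈ Set.Ico (0 : ℝ) 1) (hA : A ∈ Set.Icc (0 : ℝ) 1) :
    (∃ α ∈ Set.Icc (0 : ℝ) A,
      ¬∃ θ : ℝ, 0 < θ ∧ θ = (1 - x) * (1 - α) * (lam * θ / (1 + lam * θ))) ↔
      1 - 1 / (lam * (1 - x)) ≤ A := by
  have hk : 0 < lam * (1 - x) := mul_pos hlam (sub_pos.mpr hx.2)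
  have heradicated (α : ℝ) : (¬∃ θ : ℝ, 0 < θ ∧
      θ = (1 - x) * (1 - α) * (lam * θ / (1 + lam * θ))) ↔ 1 - 1 / (lam * (1 - x)) ≤ α := by
    rw [exists_pos_eq_mul_div_one_add_iff hlam, not_lt, ← mul_one_sub_le_one_iff hk]
    ring_nf
  simp only [heradicated]
  exact ⟨fun ⟨α, hα, hle⟩ ↦ hle.trans hα.2, fun hle ↦ ⟨A, ⟨hA.1, le_rfl⟩, hle⟩⟩
end
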